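/- Let ν : ℕ → ℂ be a multiplicative function with |ν(n)| ≤ 1 for all n, satisfying the Daboussi–Delange condition with logarithmic speed with constants c > 0 and κ ∈ (0,1). Then there exists a constant C > 0 such that for every integer N ≥ 2, (1/N) · Σ_{m=1}^{N} | (1/N) Σ_{n=1}^{N} ν(n) ν(n+m) | ≤ C / (log N)^κ. -/

import Mathlib

/-!
Put `Q = 2N` and let `e` be the standard additive character of `ℤ/Qℤ`. Since `n + m ≤ Q` for
`n, m ≤ N`, nothing wraps around modulo `Q`, and orthogonality of characters gives
`Q a(m) = ∑_j F(j) G(-j) e(jm)`, where `a(m) = ∑_{n ≤ N} ν(n) ν(n+m)`,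
`F(j) = ∑_{n ≤ N} ν(n) e(jn)` and `G(j) = ∑_{p ≤ Q} ν(p) e(jp)`. Multiplying by `conj (a m)` and
summing over `m` writes `Q ∑_m |a(m)|²` as `∑_j F(j) G(-j) P(j)`, with `P` the exponential sum of
`conj ∘ a`. The Daboussi–Delange hypothesis bounds `G` uniformly by `Q c / (log N)^κ`, and
Cauchy–Schwarz with Parseval for `F` and `P` then yields `∑_m |a(m)|² ≤ max |G|² · N`. One more
Cauchy–Schwarz gives the bound for `∑_m |a(m)|`.
-/

open Finset ComplexConjugate

section

lemma injOn_natCast_Ico {Q : ℕ} (a : ℕ) :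
    Set.InjOn (Nat.cast : ℕ → ZMod Q) (Ico a (a + Q) : Finset ℕ) := by
  intro n hn p hp h
  simp only [coe_Ico, Set.mem_Ico] at hn hp
  exact ((ZMod.natCast_eq_natCast_iff _ _ _).mp h).eq_of_abs_lt (abs_sub_lt_iff.mpr (by omega))

def correlation (A : Finset ℕ) (f g : ℕ → ℂ) (m : ℕ) : ℂ :=
  ∑ n ∈ A, f n * g (n + m)

noncomputable def expSum (Q : ℕ) [NeZero Q] (A : Finset ℕ) (f : ℕ → ℂ) (j : ZMod Q) : ℂ :=
  ∑ n ∈ A, f n * ZMod.stdAddChar (j * (n : ZMod Q))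

variable {Q : ℕ} [NeZero Q]

lemma sum_stdAddChar_mul_conj (a b : ZMod Q) :
    ∑ j : ZMod Q, ZMod.stdAddChar (j * a) * conj (ZMod.stdAddChar (j * b))
      = if a = b then (Q : ℂ) else 0 := by
  simp_rw [← AddChar.map_neg_eq_conj, ← AddChar.map_add_eq_mul, ← mul_neg, ← mul_add,
    ← sub_eq_add_neg, AddChar.sum_mulShift _ (ZMod.isPrimitive_stdAddChar Q), sub_eq_zero,
    ZMod.card]
  push_cast
  rfl

lemma sum_expSum_mul_conj {A B : Finset ℕ} (hAB : A ⊆ B)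
    (hB : Set.InjOn (Nat.cast : ℕ → ZMod Q) B) (f g : ℕ → ℂ) :
    ∑ j, expSum Q A f j * conj (expSum Q B g j) = Q * ∑ n ∈ A, f n * conj (g n) := by
  calc ∑ j, expSum Q A f j * conj (expSum Q B g j)
      = ∑ n ∈ A, ∑ p ∈ B, f n * conj (g p) * ∑ j : ZMod Q,
          ZMod.stdAddChar (j * (n : ZMod Q)) * conj (ZMod.stdAddChar (j * (p : ZMod Q))) := by
        simp_rw [expSum, map_sum, sum_mul_sum, map_mul, mul_sum]
        rw [sum_comm]
        refine sum_congr rfl fun n _ => ?_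
        rw [sum_comm]
        refine sum_congr rfl fun p _ => sum_congr rfl fun j _ => by ring
    _ = ∑ n ∈ A, ∑ p ∈ B, if n = p then Q * (f n * conj (g n)) else 0 := by
        refine sum_congr rfl fun n hn => sum_congr rfl fun p hp => ?_
        rw [sum_stdAddChar_mul_conj]
        by_cases h : n = p
        · subst h
          rw [if_pos rfl, if_pos rfl]
          ring
        · rw [if_neg (mt (hB (hAB hn) hp) h), if_neg h, mul_zero]
    _ = Q * ∑ n ∈ A, f n * conj (g n) := by
        rw [mul_sum]
        exact sum_congr rfl fun n hn => by rw [sum_ite_eq, if_pos (hAB hn)]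

lemma sum_norm_expSum_sq {A : Finset ℕ} (hA : Set.InjOn (Nat.cast : ℕ → ZMod Q) A)
    (f : ℕ → ℂ) : ∑ j, ‖expSum Q A f j‖ ^ 2 = Q * ∑ n ∈ A, ‖f n‖ ^ 2 := by
  have := sum_expSum_mul_conj subset_rfl hA f f
  simp_rw [Complex.mul_conj'] at this
  exact_mod_cast this

lemma expSum_mul_stdAddChar (A : Finset ℕ) (f : ℕ → ℂ) (m : ℕ) (j : ZMod Q) :
    expSum Q A f j * ZMod.stdAddChar (j * (m : ZMod Q))
      = expSum Q (A.map (addRightEmbedding m)) (fun n => f (n - m)) j := by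
  simp_rw [expSum, sum_map, sum_mul, addRightEmbedding_apply, Nat.add_sub_cancel, mul_assoc,
    ← AddChar.map_add_eq_mul, Nat.cast_add, mul_add]

lemma expSum_neg (B : Finset ℕ) (g : ℕ → ℂ) (j : ZMod Q) :
    expSum Q B g (-j) = conj (expSum Q B (conj ∘ g) j) := by
  simp_rw [expSum, map_sum, map_mul, Function.comp_apply, Complex.conj_conj,
    ← AddChar.map_neg_eq_conj, neg_mul]

lemma sum_expSum_mul_expSum_neg {A B : Finset ℕ} {m : ℕ} (hAB : ∀ n ∈ A, n + m ∈ B)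
    (hB : Set.InjOn (Nat.cast : ℕ → ZMod Q) B) (f g : ℕ → ℂ) :
    ∑ j, expSum Q A f j * expSum Q B g (-j) * ZMod.stdAddChar (j * (m : ZMod Q))
      = Q * correlation A f g m := by
  have hsub : A.map (addRightEmbedding m) ⊆ B := by
    simpa [subset_iff] using hAB
  simp_rw [expSum_neg, mul_right_comm _ (conj _), expSum_mul_stdAddChar,
    sum_expSum_mul_conj hsub hB, sum_map, addRightEmbedding_apply, Nat.add_sub_cancel,
    Function.comp_apply, Complex.conj_conj, correlation]

lemma sum_norm_sq_correlation_eq {A M B : Finset ℕ} (hAMB : ∀ n ∈ A, ∀ m ∈ M, n + m ∈ B)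
    (hB : Set.InjOn (Nat.cast : ℕ → ZMod Q) B) (f g : ℕ → ℂ) :
    Q * ∑ m ∈ M, (‖correlation A f g m‖ ^ 2 : ℂ)
      = ∑ j, expSum Q A f j * expSum Q B g (-j) *
          expSum Q M (fun m => conj (correlation A f g m)) j := by
  calc Q * ∑ m ∈ M, (‖correlation A f g m‖ ^ 2 : ℂ)
      = ∑ m ∈ M, conj (correlation A f g m) * (Q * correlation A f g m) := by
        rw [mul_sum]
        refine sum_congr rfl fun m _ => ?_
        rw [← Complex.conj_mul']
        ring
    _ = ∑ m ∈ M, conj (correlation A f g m) * ∑ j, expSum Q A f j * expSum Q B g (-j) *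
          ZMod.stdAddChar (j * (m : ZMod Q)) :=
        sum_congr rfl fun m hm => by
          rw [sum_expSum_mul_expSum_neg (fun n hn => hAMB n hn m hm) hB]
    _ = _ := by
        simp_rw [expSum, mul_sum]
        rw [sum_comm]
        exact sum_congr rfl fun j _ => sum_congr rfl fun m _ => by ring

lemma sum_norm_sq_correlation_le {A M B : Finset ℕ}
    (hA : Set.InjOn (Nat.cast : ℕ → ZMod Q) A) (hM : Set.InjOn (Nat.cast : ℕ → ZMod Q) M)
    (hB : Set.InjOn (Nat.cast : ℕ → ZMod Q) B) (hAMB : ∀ n ∈ A, ∀ m ∈ M, n + m ∈ B)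
    (f g : ℕ → ℂ) {β : ℝ} (hg : ∀ j, ‖expSum Q B g j‖ ≤ β) :
    ∑ m ∈ M, ‖correlation A f g m‖ ^ 2 ≤ β ^ 2 * ∑ n ∈ A, ‖f n‖ ^ 2 := by
  set S := ∑ m ∈ M, ‖correlation A f g m‖ ^ 2
  set F := expSum Q A f
  set P := expSum Q M (fun m => conj (correlation A f g m))
  set X := ∑ j, ‖F j‖ * ‖P j‖
  have hβ : 0 ≤ β := (norm_nonneg _).trans (hg 0)
  have hQ : (0 : ℝ) < Q := Nat.cast_pos.mpr (NeZero.pos Q)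
  have hS : 0 ≤ S := sum_nonneg fun m _ => sq_nonneg _
  have hQS : Q * S ≤ β * X := by
    calc Q * S = ‖(Q : ℂ) * ∑ m ∈ M, (‖correlation A f g m‖ ^ 2 : ℂ)‖ := by
          norm_cast
          rw [Real.norm_of_nonneg (by positivity)]
      _ = ‖∑ j, F j * expSum Q B g (-j) * P j‖ := by
          rw [sum_norm_sq_correlation_eq hAMB hB]
      _ ≤ ∑ j, ‖F j * expSum Q B g (-j) * P j‖ := norm_sum_le _ _
      _ ≤ ∑ j, β * (‖F j‖ * ‖P j‖) := by
          refine sum_le_sum fun j _ => ?_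
          rw [norm_mul, norm_mul, mul_right_comm, mul_comm β]
          gcongr
          exact hg (-j)
      _ = β * X := by rw [mul_sum]
  have hX : X ^ 2 ≤ (Q * ∑ n ∈ A, ‖f n‖ ^ 2) * (Q * S) := by
    calc X ^ 2 ≤ (∑ j, ‖F j‖ ^ 2) * ∑ j, ‖P j‖ ^ 2 := sum_mul_sq_le_sq_mul_sq _ _ _
      _ = (Q * ∑ n ∈ A, ‖f n‖ ^ 2) * (Q * S) := by
          simp_rw [F, P, sum_norm_expSum_sq hA, sum_norm_expSum_sq hM, Complex.norm_conj, S]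
  have hsq : (Q * S) * (Q * S) ≤ (Q * S) * (Q * (β ^ 2 * ∑ n ∈ A, ‖f n‖ ^ 2)) := by
    calc (Q * S) * (Q * S) ≤ (β * X) ^ 2 := by nlinarith [mul_nonneg hQ.le hS]
      _ = β ^ 2 * X ^ 2 := mul_pow _ _ _
      _ ≤ β ^ 2 * ((Q * ∑ n ∈ A, ‖f n‖ ^ 2) * (Q * S)) := by gcongr
      _ = (Q * S) * (Q * (β ^ 2 * ∑ n ∈ A, ‖f n‖ ^ 2)) := by ring
  rcases hS.eq_or_lt with hS0 | hSpos
  · rw [← hS0]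
    positivity
  · exact le_of_mul_le_mul_left (le_of_mul_le_mul_left hsq (by positivity)) hQ

lemma sum_norm_correlation_le {A M B : Finset ℕ}
    (hA : Set.InjOn (Nat.cast : ℕ → ZMod Q) A) (hM : Set.InjOn (Nat.cast : ℕ → ZMod Q) M)
    (hB : Set.InjOn (Nat.cast : ℕ → ZMod Q) B) (hAMB : ∀ n ∈ A, ∀ m ∈ M, n + m ∈ B)
    {f : ℕ → ℂ} (hf : ∀ n ∈ A, ‖f n‖ ≤ 1) (g : ℕ → ℂ) {β : ℝ}
    (hg : ∀ j, ‖expSum Q B g j‖ ≤ β) :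
    ∑ m ∈ M, ‖correlation A f g m‖ ≤ β * √(#M * #A) := by
  have hβ : 0 ≤ β := (norm_nonneg _).trans (hg 0)
  have hf2 : ∑ n ∈ A, ‖f n‖ ^ 2 ≤ #A := by
    simpa using sum_le_sum fun n hn => pow_le_one₀ (norm_nonneg _) (hf n hn)
  have hsq : (∑ m ∈ M, ‖correlation A f g m‖) ^ 2 ≤ (β * √(#M * #A)) ^ 2 := by
    calc (∑ m ∈ M, ‖correlation A f g m‖) ^ 2
        ≤ #M * ∑ m ∈ M, ‖correlation A f g m‖ ^ 2 := sq_sum_le_card_mul_sum_sq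
      _ ≤ #M * (β ^ 2 * #A) := by
          gcongr
          exact (sum_norm_sq_correlation_le hA hM hB hAMB f g hg).trans (by gcongr)
      _ = (β * √(#M * #A)) ^ 2 := by
          rw [mul_pow, Real.sq_sqrt (by positivity)]
          ring
  exact (pow_le_pow_iff_left₀ (sum_nonneg fun _ _ => norm_nonneg _) (by positivity)
    two_ne_zero).mp hsq

lemma expSum_eq_sum_cexp (A : Finset ℕ) (f : ℕ → ℂ) (j : ZMod Q) :
    expSum Q A f j = ∑ n ∈ A, f n *
      Complex.exp (2 * Real.pi * Complex.I * n * ((j.val / Q : ℝ) : ℂ)) := by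
  refine sum_congr rfl fun n _ => ?_
  have hval : j * (n : ZMod Q) = ((j.val * n : ℕ) : ZMod Q) := by simp
  rw [hval, ZMod.stdAddChar_apply, ZMod.toCircle_natCast]
  push_cast
  ring_nf

lemma norm_expSum_Icc_le {f : ℕ → ℂ} {δ : ℝ}
    (hf : ∀ α : ℝ, ‖(1 / (Q : ℂ)) * ∑ n ∈ Icc 1 Q,
      f n * Complex.exp (2 * Real.pi * Complex.I * n * α)‖ ≤ δ) (j : ZMod Q) :
    ‖expSum Q (Icc 1 Q) f j‖ ≤ Q * δ := by
  have hQ : (Q : ℂ) ≠ 0 := NeZero.ne _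
  calc ‖expSum Q (Icc 1 Q) f j‖
      = Q * ‖(1 / (Q : ℂ)) * expSum Q (Icc 1 Q) f j‖ := by
        rw [norm_mul, ← mul_assoc, norm_div, norm_one, Complex.norm_natCast, mul_one_div_cancel
          (by exact_mod_cast hQ), one_mul]
    _ ≤ Q * δ := by
        rw [expSum_eq_sum_cexp]
        gcongr
        exact hf _

end

theorem selfcorrelation_cesaro_bound_log_speed_general
    (ν : ℕ → ℂ) (hsize : ∀ n : ℕ, ‖ν n‖ ≤ 1)
    (c κ : ℝ) (hc : 0 < c) (hκ0 : 0 < κ)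
    (hDD : ∀ (α : ℝ) (N : ℕ), 2 ≤ N →
      ‖(1 / (N : ℂ)) * ∑ n ∈ Finset.Icc 1 N,
          ν n * Complex.exp (2 * Real.pi * Complex.I * (n : ℂ) * (α : ℂ))‖ ≤
        c / (Real.log N) ^ κ) :
    ∃ C : ℝ, 0 < C ∧ ∀ N : ℕ, 2 ≤ N →
      (1 / (N : ℝ)) * ∑ m ∈ Finset.Icc 1 N,
          ‖(1 / (N : ℂ)) * ∑ n ∈ Finset.Icc 1 N, ν n * ν (n + m)‖ ≤
        C / (Real.log N) ^ κ := by
  refine ⟨2 * c, by positivity, fun N hN => ?_⟩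
  have : NeZero (2 * N) := ⟨by omega⟩
  have hlog : 0 < Real.log N := Real.log_pos (by exact_mod_cast hN)
  have hlog_le : Real.log N ^ κ ≤ Real.log (2 * N : ℕ) ^ κ := by
    gcongr
    exact_mod_cast (by omega : N ≤ 2 * N)
  have hinj {s : Finset ℕ} (hs : s ⊆ Icc 1 (2 * N)) :
      Set.InjOn (Nat.cast : ℕ → ZMod (2 * N)) s :=
    (injOn_natCast_Ico 1).mono fun n hn => by simp only [coe_Ico, Set.mem_Ico]; grind
  have hβ (j : ZMod (2 * N)) :
      ‖expSum (2 * N) (Icc 1 (2 * N)) ν j‖ ≤ (2 * N : ℕ) * (c / Real.log N ^ κ) :=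
    (norm_expSum_Icc_le (hDD · _ (by omega)) j).trans (by gcongr)
  have hsub : Icc 1 N ⊆ Icc 1 (2 * N) := Icc_subset_Icc_right (by omega)
  have key := sum_norm_correlation_le (hinj hsub) (hinj hsub) (hinj subset_rfl)
    (fun n hn m hm => by simp only [mem_Icc] at *; omega) (fun n _ => hsize n) ν hβ
  rw [Nat.card_Icc, Nat.add_sub_cancel, Real.sqrt_mul_self (Nat.cast_nonneg _)] at key
  calc (1 / (N : ℝ)) * ∑ m ∈ Icc 1 N, ‖(1 / (N : ℂ)) * correlation (Icc 1 N) ν ν m‖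
      = (1 / N) ^ 2 * ∑ m ∈ Icc 1 N, ‖correlation (Icc 1 N) ν ν m‖ := by
        simp_rw [norm_mul, ← mul_sum, norm_div, norm_one, Complex.norm_natCast]
        ring
    _ ≤ (1 / N) ^ 2 * ((2 * N : ℕ) * (c / Real.log N ^ κ) * N) := by gcongr
    _ = 2 * c / Real.log N ^ κ := by
        push_cast
        field_simp

theorem selfcorrelation_cesaro_bound_log_speed
    (ν : ℕ → ℂ) (hsize : ∀ n : ℕ, ‖ν n‖ ≤ 1)
    (hmult : ∀ m n : ℕ, Nat.Coprime m n → ν (m * n) = ν m * ν n)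
    (c κ : ℝ) (hc : 0 < c) (hκ0 : 0 < κ) (hκ1 : κ < 1)
    (hDD : ∀ (α : ℝ) (N : ℕ), 2 ≤ N →
      ‖(1 / (N : ℂ)) * ∑ n ∈ Finset.Icc 1 N,
          ν n * Complex.exp (2 * Real.pi * Complex.I * (n : ℂ) * (α : ℂ))‖ ≤
        c / (Real.log N) ^ κ) :
    ∃ C : ℝ, 0 < C ∧ ∀ N : ℕ, 2 ≤ N →
      (1 / (N : ℝ)) * ∑ m ∈ Finset.Icc 1 N,
          ‖(1 / (N : ℂ)) * ∑ n ∈ Finset.Icc 1 N, ν n * ν (n + m)‖ ≤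
        C / (Real.log N) ^ κ :=
  selfcorrelation_cesaro_bound_log_speed_general ν hsize c κ hc hκ0 hDD
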